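/- Let n0, n1 ≥ 1 be natural numbers, n := n0 + n1, and let t ≥ 2 be an even natural number. Then the number of binary sequences x in B_{n0,n1} with τ(x) = t satisfies 2·n0·n1·|{x ∈ B_{n0,n1} : τ(x) = t}| = (n·t − t²) · C(n0, t/2) · C(n1, t/2), where C(a,b) denotes the binomial coefficient. -/

import Mathlib

/-- The number of jumps `τ(x) = |{i ∈ [n-1] : x_i ≠ x_{i+1}}|` of a binary sequence
`x ∈ {0,1}^n`. -/
def tau {n : ℕ} (x : Fin n → Bool) : ℕ :=
  (Finset.univ.filter (fun i : Fin n =>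
    ∃ h : (i : ℕ) + 1 < n, x i ≠ x ⟨(i : ℕ) + 1, h⟩)).card

/-- `B_{n0,n1}`, the set of binary sequences of length `n0 + n1` with exactly
`n0` zeros and `n1` ones. -/
def Bseq (n0 n1 : ℕ) : Finset (Fin (n0 + n1) → Bool) :=
  Finset.univ.filter (fun x =>
    (Finset.univ.filter (fun i => x i = false)).card = n0 ∧
    (Finset.univ.filter (fun i => x i = true)).card = n1)

open Finset

/-!
A sequence with `t = 2s` jumps splits into `2s + 1` maximal runs of equal bits. If it starts
with `0`, its `s + 1` runs of zeros form a composition of `n0` and its `s` runs of ones one of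
`n1`, so there are `C(n0-1, s) C(n1-1, s-1)` such sequences, and symmetrically for a leading `1`.
The count is obtained by induction on the length, peeling off the first bit; on the side of the
formula this is Pascal's rule for compositions. The identities `n C(n-1, s) = (n-s) C(n, s)` and
`n C(n-1, s-1) = s C(n, s)` then turn the sum of the two products into the stated formula.
-/

/-- The number of compositions of `n` into `r` positive parts. -/
def compositionCount : ℕ → ℕ → ℕ
  | 0, 0 => 1
  | n + 1, r + 1 => n.choose r
  | _, _ => 0

@[simp] lemma compositionCount_zero_succ (r : ℕ) : compositionCount 0 (r + 1) = 0 := rfl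

lemma compositionCount_succ_succ (n r : ℕ) :
    compositionCount (n + 1) (r + 1) = compositionCount n (r + 1) + compositionCount n r := by
  cases n <;> cases r <;> simp [compositionCount, Nat.choose_succ_succ', add_comm]

lemma mul_compositionCount (n s : ℕ) : n * compositionCount n s = s * n.choose s := by
  rcases n with _ | n <;> rcases s with _ | s <;> simp [compositionCount]
  linarith [Nat.add_one_mul_choose_eq n s]

lemma mul_compositionCount_succ (n s : ℕ) :
    n * compositionCount n (s + 1) = (n - s) * n.choose s := by
  cases n with
  | zero => simp
  | succ n => rw [compositionCount, mul_comm, Nat.choose_mul_succ_eq, mul_comm]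

def bitCount {n : ℕ} (b : Bool) (x : Fin n → Bool) : ℕ := #{i | x i = b}

lemma bitCount_cons {k : ℕ} (b c : Bool) (y : Fin k → Bool) :
    bitCount c (Fin.cons b y : Fin (k + 1) → Bool) = bitCount c y + if b = c then 1 else 0 := by
  rw [bitCount, bitCount, card_filter, card_filter, Fin.sum_univ_succ, add_comm]
  simp

lemma tau_eq_card_castSucc_ne_succ {k : ℕ} (x : Fin (k + 1) → Bool) :
    tau x = #{i : Fin k | x i.castSucc ≠ x i.succ} := by
  rw [tau, card_filter, card_filter, Fin.sum_univ_castSucc]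
  simp [Fin.succ]

lemma tau_cons {k : ℕ} (b : Bool) (y : Fin (k + 1) → Bool) :
    tau (Fin.cons b y : Fin (k + 2) → Bool) = tau y + if b = y 0 then 0 else 1 := by
  rw [tau_eq_card_castSucc_ne_succ, tau_eq_card_castSucc_ne_succ, card_filter, card_filter,
    Fin.sum_univ_succ, add_comm]
  simp

lemma card_filter_head_eq_and {k : ℕ} (b : Bool) (P : (Fin (k + 1) → Bool) → Prop)
    [DecidablePred P] :
    #{x | x 0 = b ∧ P x} = #{y : Fin k → Bool | P (Fin.cons b y)} := by
  refine (card_nbij' (Fin.cons b) Fin.tail ?_ ?_ ?_ ?_).symm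
  · intro y hy; simpa using hy
  · intro x hx
    obtain ⟨rfl, hx⟩ := (mem_filter.1 hx).2
    simpa using hx
  · intro y _; simp
  · intro x hx
    obtain ⟨rfl, -⟩ := (mem_filter.1 hx).2
    exact Fin.cons_self_tail x

lemma card_filter_eq_head_add {k : ℕ} (b : Bool) (P : (Fin (k + 1) → Bool) → Prop)
    [DecidablePred P] :
    #{x | P x} = #{x | x 0 = b ∧ P x} + #{x | x 0 = !b ∧ P x} := by
  rw [← card_filter_add_card_filter_not (fun x => x 0 = b), filter_filter, filter_filter]
  simp only [Bool.eq_not_iff, and_comm]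

def startCount (k p q t : ℕ) (b : Bool) : ℕ :=
  #{x : Fin (k + 1) → Bool | x 0 = b ∧ bitCount b x = p ∧ bitCount (!b) x = q ∧ tau x = t}

lemma startCount_zero (p q t : ℕ) (b : Bool) :
    startCount 0 p q t b = if p = 1 ∧ q = 0 ∧ t = 0 then 1 else 0 := by
  rw [startCount, card_filter_head_eq_and]
  simp only [bitCount_cons, tau_eq_card_castSucc_ne_succ]
  simp [bitCount, eq_comm]
  split_ifs <;> rfl

lemma startCount_succ_zero (k q t : ℕ) (b : Bool) : startCount (k + 1) 0 q t b = 0 := by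
  rw [startCount, card_filter_head_eq_and]
  simp [bitCount_cons]

lemma startCount_succ_succ_zero (k p q : ℕ) (b : Bool) :
    startCount (k + 1) (p + 1) q 0 b = startCount k p q 0 b := by
  rw [startCount, card_filter_head_eq_and, card_filter_eq_head_add b, startCount]
  refine (congrArg₂ (· + ·) ?_ (card_eq_zero.2 (filter_eq_empty_iff.2 fun y _ hy => ?_))).trans
    (add_zero _)
  · refine congrArg card (filter_congr fun y _ => and_congr_right fun hy => ?_)
    simp [hy, bitCount_cons, tau_cons]
  · obtain ⟨hy0, -, -, ht⟩ := hy
    simp [hy0, tau_cons] at ht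

lemma startCount_succ_succ_succ (k p q t : ℕ) (b : Bool) :
    startCount (k + 1) (p + 1) q (t + 1) b =
      startCount k p q (t + 1) b + startCount k q p t (!b) := by
  rw [startCount, card_filter_head_eq_and, card_filter_eq_head_add b, startCount, startCount]
  congr 1 <;> refine congrArg card (filter_congr fun y _ => and_congr_right fun hy => ?_)
  · simp [hy, bitCount_cons, tau_cons]
  · simp [hy, bitCount_cons, tau_cons]
    tauto

theorem startCount_eq {k p q t : ℕ} (b : Bool) (h : p + q = k + 1) :
    startCount k p q t b = compositionCount p (t / 2 + 1) * compositionCount q ((t + 1) / 2) := by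
  induction k generalizing p q t b with
  | zero =>
    rw [startCount_zero]
    obtain ⟨rfl, rfl⟩ | ⟨rfl, rfl⟩ : p = 0 ∧ q = 1 ∨ p = 1 ∧ q = 0 := by omega
    · simp
    · rcases t with _ | t
      · rfl
      · simp [compositionCount, show (t + 1 + 1) / 2 = t / 2 + 1 by omega]
  | succ k ih =>
    rcases p with _ | p
    · simp [startCount_succ_zero]
    rcases t with _ | t
    · rw [startCount_succ_succ_zero, ih b (by omega)]
      rcases q with _ | q
      · obtain rfl : p = k + 1 := by omega
        simp [compositionCount]
      · simp [compositionCount]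
    · rw [startCount_succ_succ_succ, ih b (by omega), ih (!b) (show q + p = k + 1 by omega),
        compositionCount_succ_succ, show (t + 1 + 1) / 2 = t / 2 + 1 by omega]
      ring

theorem card_filter_bitCount_tau {n n0 n1 t : ℕ} (hn : n0 + n1 = n) (hpos : n ≠ 0) :
    #{x : Fin n → Bool | bitCount false x = n0 ∧ bitCount true x = n1 ∧ tau x = t} =
      compositionCount n0 (t / 2 + 1) * compositionCount n1 ((t + 1) / 2) +
        compositionCount n1 (t / 2 + 1) * compositionCount n0 ((t + 1) / 2) := by
  obtain ⟨k, rfl⟩ := Nat.exists_eq_add_one_of_ne_zero hpos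
  rw [card_filter_eq_head_add false, ← startCount_eq false hn,
    ← startCount_eq true (show n1 + n0 = k + 1 by omega)]
  simp only [startCount, Bool.not_false, Bool.not_true, and_left_comm]

lemma filter_tau_Bseq (n0 n1 t : ℕ) :
    (Bseq n0 n1).filter (fun x => tau x = t) =
      ({x | bitCount false x = n0 ∧ bitCount true x = n1 ∧ tau x = t} :
        Finset (Fin (n0 + n1) → Bool)) := by
  rw [Bseq, filter_filter]
  exact filter_congr fun _ _ => and_assoc

lemma two_mul_mul_compositionCount_eq (n0 n1 s : ℕ) :
    2 * n0 * n1 * (compositionCount n0 (s + 1) * compositionCount n1 s +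
        compositionCount n1 (s + 1) * compositionCount n0 s) =
      ((n0 + n1) * (2 * s) - (2 * s) ^ 2) * n0.choose s * n1.choose s := by
  calc _ = 2 * ((n0 * compositionCount n0 (s + 1)) * (n1 * compositionCount n1 s) +
          (n1 * compositionCount n1 (s + 1)) * (n0 * compositionCount n0 s)) := by ring
    _ = 2 * s * ((n0 - s) + (n1 - s)) * n0.choose s * n1.choose s := by
      rw [mul_compositionCount_succ, mul_compositionCount_succ, mul_compositionCount,
        mul_compositionCount]
      ring
    _ = _ := by
      by_cases hs : s ≤ n0 ∧ s ≤ n1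
      · obtain ⟨⟨a, rfl⟩, ⟨b, rfl⟩⟩ :=
          And.imp Nat.exists_eq_add_of_le Nat.exists_eq_add_of_le hs
        congr 3
        rw [Nat.add_sub_cancel_left, Nat.add_sub_cancel_left]
        refine (Nat.sub_eq_of_eq_add ?_).symm
        ring
      · rcases not_and_or.1 hs with h | h <;> simp [Nat.choose_eq_zero_of_lt (not_le.1 h)]

theorem stmt_1_general (n0 n1 t : ℕ) (ht : Even t) :
    2 * n0 * n1 * ((Bseq n0 n1).filter (fun x => tau x = t)).card =
      ((n0 + n1) * t - t ^ 2) * Nat.choose n0 (t / 2) * Nat.choose n1 (t / 2) := by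
  obtain ⟨s, rfl⟩ := ht
  rcases Nat.eq_zero_or_pos (n0 + n1) with hn | hn
  · obtain ⟨rfl, rfl⟩ : n0 = 0 ∧ n1 = 0 := by omega
    simp
  rw [filter_tau_Bseq, card_filter_bitCount_tau rfl hn.ne', show (s + s) / 2 = s by omega,
    show (s + s + 1) / 2 = s by omega, ← two_mul]
  exact two_mul_mul_compositionCount_eq n0 n1 s

theorem stmt_1 (n0 n1 t : ℕ) (h0 : 1 ≤ n0) (h1 : 1 ≤ n1) (ht : Even t) (ht2 : 2 ≤ t) :
    2 * n0 * n1 * ((Bseq n0 n1).filter (fun x => tau x = t)).card =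
      ((n0 + n1) * t - t ^ 2) * Nat.choose n0 (t / 2) * Nat.choose n1 (t / 2) :=
  stmt_1_general n0 n1 t ht
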